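/- arXiv:1402.4734 — 6 statements merged into one kernel-verified Lean document; each statement's English description precedes it below -/
import Mathlib

section
/- For every unit vector n = (n₁, n₂, n₃) ∈ ℝ³ with n₃ > −1 and every b ∈ ℝ², the map V(n) preserves the Euclidean norm: ‖V(n) b‖ = ‖b‖. (This is flow hypothesis (ii) for the discrete velocity field: the magnitude of the induced velocity on each face equals the magnitude of the master velocity.) -/
/-! With `s = n₁ b₁ + n₂ b₂` and `d = 1 + n₃`,
`‖V(n) b‖² = ‖b‖² - 2 s² / d + (n₁² + n₂²) s² / d² + s²`, and on the unit sphere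
`n₁² + n₂² = (1 - n₃) d`, so the three correction terms cancel. At the pole `d = 0` the junk
division is harmless: there `n₁ = n₂ = 0`, hence `s = 0`. -/

/-- The discrete velocity field matrix of equation (2.6): sends a master
velocity `b` on the horizontal plane to the induced velocity on a face with
outer unit normal `n`. -/
noncomputable def Vmap (n : EuclideanSpace ℝ (Fin 3)) (b : EuclideanSpace ℝ (Fin 2)) :
    EuclideanSpace ℝ (Fin 3) :=
  WithLp.toLp 2 ![b 0 - n 0 * (n 0 * b 0 + n 1 * b 1) / (1 + n 2),
    b 1 - n 1 * (n 0 * b 0 + n 1 * b 1) / (1 + n 2),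
    n 0 * b 0 + n 1 * b 1]

theorem sq_sub_add_sq_sub_add_sq_eq {x y z : ℝ} (h : x ^ 2 + y ^ 2 + z ^ 2 = 1) (p q : ℝ) :
    (p - x * (x * p + y * q) / (1 + z)) ^ 2 + (q - y * (x * p + y * q) / (1 + z)) ^ 2
      + (x * p + y * q) ^ 2 = p ^ 2 + q ^ 2 := by
  by_cases hz : 1 + z = 0
  · have hx : x = 0 := by nlinarith
    have hy : y = 0 := by nlinarith
    simp [hx, hy]
  · have hxy : x ^ 2 + y ^ 2 = (1 - z) * (1 + z) := by linear_combination h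
    field_simp
    linear_combination (x * p + y * q) ^ 2 * hxy

theorem norm_sq_vmap (n : EuclideanSpace ℝ (Fin 3)) (b : EuclideanSpace ℝ (Fin 2)) :
    ‖Vmap n b‖ ^ 2 = (b 0 - n 0 * (n 0 * b 0 + n 1 * b 1) / (1 + n 2)) ^ 2
      + (b 1 - n 1 * (n 0 * b 0 + n 1 * b 1) / (1 + n 2)) ^ 2 + (n 0 * b 0 + n 1 * b 1) ^ 2 := by
  simp [EuclideanSpace.real_norm_sq_eq, Fin.sum_univ_three, Vmap]

theorem stmt0_general (n : EuclideanSpace ℝ (Fin 3)) (hn : ‖n‖ = 1)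
    (b : EuclideanSpace ℝ (Fin 2)) : ‖Vmap n b‖ = ‖b‖ := by
  have hsphere : n 0 ^ 2 + n 1 ^ 2 + n 2 ^ 2 = 1 := by
    simpa [hn, Fin.sum_univ_three] using (EuclideanSpace.real_norm_sq_eq n).symm
  rw [← sq_eq_sq₀ (norm_nonneg _) (norm_nonneg _), norm_sq_vmap,
    sq_sub_add_sq_sub_add_sq_eq hsphere, EuclideanSpace.real_norm_sq_eq, Fin.sum_univ_two]

/-- Flow hypothesis (ii): the induced velocity has the same magnitude as the
master velocity. -/
theorem stmt0 (n : EuclideanSpace ℝ (Fin 3)) (hn : ‖n‖ = 1) (h3 : -1 < n 2)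
    (b : EuclideanSpace ℝ (Fin 2)) : ‖Vmap n b‖ = ‖b‖ :=
  stmt0_general n hn b
end

section
/- Let ι be a nonempty finite index set, n : ι → ℝ³ a family of unit vectors each with strictly positive third coordinate, b ∈ ℝ² a unit vector, and w : ι → ℝ a family of strictly positive weights. Then the inner product of the horizontal projection of Σ_{i ∈ ι} w(i) • V(n(i)) b with b is strictly positive; in particular Σ_{i ∈ ι} w(i) • V(n(i)) b ≠ 0. -/
open scoped RealInnerProductSpace

/-- Horizontal projection of a vector in `ℝ³`. -/
noncomputable def hproj (x : EuclideanSpace ℝ (Fin 3)) : EuclideanSpace ℝ (Fin 2) :=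
  WithLp.toLp 2 ![x 0, x 1]

/-!
Writing `s = n₁ b₁ + n₂ b₂`, the horizontal part of `V(n) b` pairs with `b` to
`|b|² - s² / (1 + n₃)`. Cauchy–Schwarz and `|n| = 1` give `s² ≤ (1 - n₃²) |b|²`, so this
pairing is at least `n₃ |b|² > 0`. The pairing with `b` of the horizontal projection is linear,
so the weighted sum pairs positively with `b` as well, and in particular cannot vanish.
-/

lemma hproj_add (x y : EuclideanSpace ℝ (Fin 3)) : hproj (x + y) = hproj x + hproj y := by
  ext i; fin_cases i <;> rfl

lemma hproj_smul (c : ℝ) (x : EuclideanSpace ℝ (Fin 3)) : hproj (c • x) = c • hproj x := by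
  ext i; fin_cases i <;> rfl

noncomputable def hprojₗ : EuclideanSpace ℝ (Fin 3) →ₗ[ℝ] EuclideanSpace ℝ (Fin 2) where
  toFun := hproj
  map_add' := hproj_add
  map_smul' := hproj_smul

lemma inner_hproj_sum_smul {ι : Type*} (s : Finset ι) (w : ι → ℝ)
    (x : ι → EuclideanSpace ℝ (Fin 3)) (b : EuclideanSpace ℝ (Fin 2)) :
    ⟪hproj (∑ i ∈ s, w i • x i), b⟫ = ∑ i ∈ s, w i * ⟪hproj (x i), b⟫ := by
  change ⟪hprojₗ (∑ i ∈ s, w i • x i), b⟫ = _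
  simp only [map_sum, map_smul, sum_inner, real_inner_smul_left]
  rfl

lemma inner_hproj_Vmap (n : EuclideanSpace ℝ (Fin 3)) (hn : 1 + n 2 ≠ 0)
    (b : EuclideanSpace ℝ (Fin 2)) :
    ⟪hproj (Vmap n b), b⟫ = ‖b‖ ^ 2 - (n 0 * b 0 + n 1 * b 1) ^ 2 / (1 + n 2) := by
  simp only [hproj, Vmap, PiLp.inner_apply, EuclideanSpace.real_norm_sq_eq, Fin.sum_univ_two,
    PiLp.toLp_apply, RCLike.inner_apply, conj_trivial, Matrix.cons_val_zero, Matrix.cons_val_one]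
  field_simp
  ring

lemma mul_norm_sq_le_inner_hproj_Vmap (n : EuclideanSpace ℝ (Fin 3)) (hn : ‖n‖ = 1)
    (hn₂ : -1 < n 2) (b : EuclideanSpace ℝ (Fin 2)) :
    n 2 * ‖b‖ ^ 2 ≤ ⟪hproj (Vmap n b), b⟫ := by
  have hpos : 0 < 1 + n 2 := by linarith
  have hn_sq : n 0 ^ 2 + n 1 ^ 2 + n 2 ^ 2 = 1 := by
    simpa [EuclideanSpace.real_norm_sq_eq, Fin.sum_univ_three, hn] using
      (EuclideanSpace.real_norm_sq_eq n).symm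
  have hb_sq : ‖b‖ ^ 2 = b 0 ^ 2 + b 1 ^ 2 := by
    simp [EuclideanSpace.real_norm_sq_eq, Fin.sum_univ_two]
  have cauchy_schwarz : (n 0 * b 0 + n 1 * b 1) ^ 2 ≤ (1 - n 2) * (1 + n 2) * ‖b‖ ^ 2 := by
    nlinarith [sq_nonneg (n 0 * b 1 - n 1 * b 0)]
  have : (n 0 * b 0 + n 1 * b 1) ^ 2 / (1 + n 2) ≤ (1 - n 2) * ‖b‖ ^ 2 := by
    rw [div_le_iff₀ hpos]; linarith
  rw [inner_hproj_Vmap n hpos.ne']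
  linarith

lemma inner_hproj_Vmap_pos (n : EuclideanSpace ℝ (Fin 3)) (hn : ‖n‖ = 1) (hn₂ : 0 < n 2)
    {b : EuclideanSpace ℝ (Fin 2)} (hb : b ≠ 0) :
    0 < ⟪hproj (Vmap n b), b⟫ :=
  (mul_pos hn₂ (by positivity)).trans_le
    (mul_norm_sq_le_inner_hproj_Vmap n hn (by linarith) b)

/-- The weighted average of the induced velocities has horizontal projection
making a positive inner product with the master direction; in particular the
average is nonzero. -/
theorem stmt2 {ι : Type*} [Fintype ι] [Nonempty ι]
    (n : ι → EuclideanSpace ℝ (Fin 3)) (hn : ∀ i, ‖n i‖ = 1) (hn3 : ∀ i, 0 < n i 2)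
    (b : EuclideanSpace ℝ (Fin 2)) (hb : ‖b‖ = 1)
    (w : ι → ℝ) (hw : ∀ i, 0 < w i) :
    0 < ⟪hproj (∑ i, w i • Vmap (n i) b), b⟫ ∧ (∑ i, w i • Vmap (n i) b) ≠ 0 := by
  have hb₀ : b ≠ 0 := norm_ne_zero_iff.mp (by simp [hb])
  have hpos : 0 < ⟪hproj (∑ i, w i • Vmap (n i) b), b⟫ := by
    rw [inner_hproj_sum_smul]
    exact Finset.sum_pos (fun i _ => mul_pos (hw i) (inner_hproj_Vmap_pos (n i) (hn i) (hn3 i) hb₀))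
      Finset.univ_nonempty
  refine ⟨hpos, fun hzero => ?_⟩
  rw [hzero, show hproj 0 = 0 from map_zero hprojₗ, inner_zero_left] at hpos
  exact lt_irrefl 0 hpos
end

section
/- (Lemma 2.1(i).) Let ι be a nonempty finite index set, n : ι → ℝ³ a family of unit vectors each with strictly positive third coordinate, and w : ι → ℝ a family of strictly positive weights. Then the linear map L : ℝ² → ℝ³ defined by L b = Σ_{i ∈ ι} w(i) • V(n(i)) b has trivial kernel, i.e., L b = 0 implies b = 0. -/
lemma EuclideanSpace.real_norm_sq_eq_fin_two (x : EuclideanSpace ℝ (Fin 2)) :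
    ‖x‖ ^ 2 = x 0 ^ 2 + x 1 ^ 2 := by
  simp [EuclideanSpace.real_norm_sq_eq, Fin.sum_univ_two]

lemma EuclideanSpace.real_norm_sq_eq_fin_three (x : EuclideanSpace ℝ (Fin 3)) :
    ‖x‖ ^ 2 = x 0 ^ 2 + x 1 ^ 2 + x 2 ^ 2 := by
  simp [EuclideanSpace.real_norm_sq_eq, Fin.sum_univ_three]

lemma Vmap_horizontal_pairing_eq {n : EuclideanSpace ℝ (Fin 3)} (hn : ‖n‖ = 1) (hn3 : 1 + n 2 ≠ 0)
    (b : EuclideanSpace ℝ (Fin 2)) :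
    b 0 * Vmap n b 0 + b 1 * Vmap n b 1 =
      n 2 * ‖b‖ ^ 2 + (n 0 * b 1 - n 1 * b 0) ^ 2 / (1 + n 2) := by
  have hunit : n 0 ^ 2 + n 1 ^ 2 + n 2 ^ 2 = 1 := by
    rw [← EuclideanSpace.real_norm_sq_eq_fin_three, hn, one_pow]
  rw [EuclideanSpace.real_norm_sq_eq_fin_two]
  simp only [Vmap, PiLp.toLp_apply, Matrix.cons_val_zero, Matrix.cons_val_one]
  field_simp
  linear_combination -(b 0 ^ 2 + b 1 ^ 2) * hunit

lemma mul_norm_sq_le_Vmap_horizontal_pairing {n : EuclideanSpace ℝ (Fin 3)} (hn : ‖n‖ = 1)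
    (hn3 : -1 < n 2) (b : EuclideanSpace ℝ (Fin 2)) :
    n 2 * ‖b‖ ^ 2 ≤ b 0 * Vmap n b 0 + b 1 * Vmap n b 1 := by
  have hpos : 0 < 1 + n 2 := by linarith
  rw [Vmap_horizontal_pairing_eq hn hpos.ne']
  have : 0 ≤ (n 0 * b 1 - n 1 * b 0) ^ 2 / (1 + n 2) := by positivity
  linarith

/-- Lemma 2.1(i): the averaging operator composed with the global velocity
field has trivial kernel. -/
theorem stmt3 {ι : Type*} [Fintype ι] [Nonempty ι]
    (n : ι → EuclideanSpace ℝ (Fin 3)) (hn : ∀ i, ‖n i‖ = 1) (hn3 : ∀ i, 0 < n i 2)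
    (w : ι → ℝ) (hw : ∀ i, 0 < w i) :
    ∀ b : EuclideanSpace ℝ (Fin 2), (∑ i, w i • Vmap (n i) b) = 0 → b = 0 := by
  intro b hL
  have hcoord (j : Fin 3) : ∑ i, w i * Vmap (n i) b j = 0 := by
    simpa using congrArg (· j) hL
  have hpairing : ∑ i, w i * (b 0 * Vmap (n i) b 0 + b 1 * Vmap (n i) b 1) = 0 := by
    simp only [mul_add, Finset.sum_add_distrib, mul_left_comm (w _), ← Finset.mul_sum,
      hcoord, mul_zero, add_zero]
  have hbound : (∑ i, w i * n i 2) * ‖b‖ ^ 2 ≤ 0 := by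
    rw [← hpairing, Finset.sum_mul]
    refine Finset.sum_le_sum fun i _ => ?_
    rw [mul_assoc]
    exact mul_le_mul_of_nonneg_left
      (mul_norm_sq_le_Vmap_horizontal_pairing (hn i) (by linarith [hn3 i]) b) (hw i).le
  have hweight : 0 < ∑ i, w i * n i 2 :=
    Finset.sum_pos (fun i _ => mul_pos (hw i) (hn3 i)) Finset.univ_nonempty
  have hnorm : ‖b‖ ^ 2 ≤ 0 := nonpos_of_mul_nonpos_right hbound hweight
  simpa using le_antisymm hnorm (sq_nonneg ‖b‖)
end

section
/- (Lemma 3.1.) Let ι be a nonempty finite index set, n : ι → ℝ³ a family of unit vectors each with strictly positive third coordinate, w : ι → ℝ a family of strictly positive weights, g > 0 a real number, z : ι → ℝ a family of heights, and set z_max = max_{i ∈ ι} z(i) and c(i) = √(2g·(1/(2g) + z_max − z(i))) for each i. Then the linear map G : ℝ² → ℝ³ defined by G b = Σ_{i ∈ ι} w(i)·c(i) • V(n(i)) b has trivial kernel, and its range is a two-dimensional subspace of ℝ³. -/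
lemma EuclideanSpace.sq_add_sq_add_sq_of_norm_eq_one {n : EuclideanSpace ℝ (Fin 3)}
    (hn : ‖n‖ = 1) : n 0 ^ 2 + n 1 ^ 2 + n 2 ^ 2 = 1 := by
  have h := congrArg (· ^ 2) hn
  simpa [EuclideanSpace.norm_sq_eq, Fin.sum_univ_three] using h

lemma EuclideanSpace.norm_sq_eq_fin_two (b : EuclideanSpace ℝ (Fin 2)) :
    ‖b‖ ^ 2 = b 0 ^ 2 + b 1 ^ 2 := by
  simp [EuclideanSpace.norm_sq_eq, Fin.sum_univ_two]

lemma Vmap_pairing_sub_mul_norm_sq {n : EuclideanSpace ℝ (Fin 3)} (hn : ‖n‖ = 1)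
    (hn3 : 1 + n 2 ≠ 0) (b : EuclideanSpace ℝ (Fin 2)) :
    Vmap n b 0 * b 0 + Vmap n b 1 * b 1 - n 2 * ‖b‖ ^ 2
      = (n 0 * b 1 - n 1 * b 0) ^ 2 / (1 + n 2) := by
  have hsum := EuclideanSpace.sq_add_sq_add_sq_of_norm_eq_one hn
  rw [EuclideanSpace.norm_sq_eq_fin_two, eq_div_iff hn3]
  change ((b 0 - n 0 * (n 0 * b 0 + n 1 * b 1) / (1 + n 2)) * b 0
    + (b 1 - n 1 * (n 0 * b 0 + n 1 * b 1) / (1 + n 2)) * b 1 - _) * _ = _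
  field_simp
  linear_combination -(b 0 ^ 2 + b 1 ^ 2) * hsum

lemma mul_norm_sq_le_Vmap_pairing {n : EuclideanSpace ℝ (Fin 3)} (hn : ‖n‖ = 1)
    (hn3 : 0 < 1 + n 2) (b : EuclideanSpace ℝ (Fin 2)) :
    n 2 * ‖b‖ ^ 2 ≤ Vmap n b 0 * b 0 + Vmap n b 1 * b 1 := by
  have := Vmap_pairing_sub_mul_norm_sq hn hn3.ne' b
  have : 0 ≤ (n 0 * b 1 - n 1 * b 0) ^ 2 / (1 + n 2) := by positivity
  linarith

lemma Vmap_pairing_pos {n : EuclideanSpace ℝ (Fin 3)} (hn : ‖n‖ = 1) (hn3 : 0 < n 2)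
    {b : EuclideanSpace ℝ (Fin 2)} (hb : b ≠ 0) :
    0 < Vmap n b 0 * b 0 + Vmap n b 1 * b 1 :=
  (mul_pos hn3 (by positivity)).trans_le (mul_norm_sq_le_Vmap_pairing hn (by linarith) b)

lemma injective_of_forall_eq_sum_smul_Vmap {ι : Type*} [Fintype ι] [Nonempty ι]
    {n : ι → EuclideanSpace ℝ (Fin 3)} (hn : ∀ i, ‖n i‖ = 1) (hn3 : ∀ i, 0 < n i 2)
    {a : ι → ℝ} (ha : ∀ i, 0 < a i)
    {G : EuclideanSpace ℝ (Fin 2) →ₗ[ℝ] EuclideanSpace ℝ (Fin 3)}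
    (hG : ∀ b, G b = ∑ i, a i • Vmap (n i) b) :
    Function.Injective G := by
  rw [injective_iff_map_eq_zero]
  intro b hb
  by_contra hb0
  have hpairing : G b 0 * b 0 + G b 1 * b 1
      = ∑ i, a i * (Vmap (n i) b 0 * b 0 + Vmap (n i) b 1 * b 1) := by
    simp only [hG, WithLp.ofLp_sum, WithLp.ofLp_smul, Finset.sum_apply, Pi.smul_apply,
      smul_eq_mul, Finset.sum_mul, ← Finset.sum_add_distrib, mul_add, mul_assoc]
  have hpos : 0 < ∑ i, a i * (Vmap (n i) b 0 * b 0 + Vmap (n i) b 1 * b 1) :=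
    Finset.sum_pos (fun i _ => mul_pos (ha i) (Vmap_pairing_pos (hn i) (hn3 i) hb0))
      Finset.univ_nonempty
  simp [hb, ← hpairing] at hpos

lemma sqrt_two_mul_add_sub_pos {g z zmax : ℝ} (hg : 0 < g) (hz : z ≤ zmax) :
    0 < Real.sqrt (2 * g * (1 / (2 * g) + zmax - z)) := by
  have : 0 < 1 / (2 * g) := by positivity
  exact Real.sqrt_pos.mpr (mul_pos (by positivity) (by linarith))

/-- Lemma 3.1: the averaging operator composed with the gravity velocity
field (with gravity-induced speed magnitudes `c i`) has trivial kernel and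
two-dimensional range. -/
theorem stmt5 {ι : Type*} [Fintype ι] [Nonempty ι]
    (n : ι → EuclideanSpace ℝ (Fin 3)) (hn : ∀ i, ‖n i‖ = 1) (hn3 : ∀ i, 0 < n i 2)
    (w : ι → ℝ) (hw : ∀ i, 0 < w i) (g : ℝ) (hg : 0 < g) (z : ι → ℝ)
    (zmax : ℝ) (hzmax : zmax = Finset.univ.sup' Finset.univ_nonempty z)
    (c : ι → ℝ) (hc : ∀ i, c i = Real.sqrt (2 * g * (1 / (2 * g) + zmax - z i)))
    (G : EuclideanSpace ℝ (Fin 2) →ₗ[ℝ] EuclideanSpace ℝ (Fin 3))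
    (hG : ∀ b, G b = ∑ i, (w i * c i) • Vmap (n i) b) :
    LinearMap.ker G = ⊥ ∧ Module.finrank ℝ (LinearMap.range G) = 2 := by
  have hc_pos (i : ι) : 0 < c i := by
    rw [hc i]
    exact sqrt_two_mul_add_sub_pos hg (hzmax ▸ Finset.le_sup' z (Finset.mem_univ i))
  have hinj := injective_of_forall_eq_sum_smul_Vmap hn hn3
    (fun i => mul_pos (hw i) (hc_pos i)) hG
  refine ⟨LinearMap.ker_eq_bot.mpr hinj, ?_⟩
  rw [LinearMap.finrank_range_of_inj hinj, finrank_euclideanSpace_fin]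
end

section
/- (Proposition 4.2(i).) Let θ ∈ (0, π) and c > 0, and let Δ ⊆ ℝ² be the closed triangle with vertices (0,0), (1,0) and c·(cos θ, sin θ). Let t₀ ∈ (θ, π) be the unique angle such that (cos t₀, sin t₀) is a positive scalar multiple of c·(cos θ, sin θ) − (1, 0). Then the parametrized inner-segment length function χ(t) = d(Δ, (cos t, sin t)) satisfies: χ(t) = c·sin θ / (c·sin(θ − t) + sin t) for t ∈ [0, θ]; χ(t) = c·sin θ / sin t for t ∈ [θ, t₀]; and χ(t) = sin θ / sin(t − θ) for t ∈ [t₀, π]. -/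
/-- The inner-segment length `d(Δ, u)`: the supremum of lengths `r ≥ 0` such
that some segment of the form `[x, x + r • u]` is contained in `Δ`. -/
noncomputable def innerSegLen (Δ : Set (EuclideanSpace ℝ (Fin 2)))
    (u : EuclideanSpace ℝ (Fin 2)) : ℝ :=
  sSup {r : ℝ | 0 ≤ r ∧ ∃ x, segment ℝ x (x + r • u) ⊆ Δ}

/-!
A linear functional `f` with `f u > 0` bounds the length of every segment `[y, y + s • u]` in a
convex set `Δ` by `(max f - min f) / f u`. For a triangle, the bound is attained by the segment
in direction `u` from a vertex to the opposite side, taking for `f` a normal of that side. The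
side changes when `u` passes the directions of the sides `c • (cos θ, sin θ)` (at `t = θ`) and
`c • (cos θ, sin θ) - (1, 0)` (at `t = t₀`).
-/

open Real Set

local notation "ℝ²" => EuclideanSpace ℝ (Fin 2)

theorem isMinOn_convexHull_of_forall {E : Type*} [AddCommGroup E] [Module ℝ E] {s : Set E}
    {f : E →ₗ[ℝ] ℝ} {x : E} (h : ∀ p ∈ s, f x ≤ f p) : IsMinOn f (convexHull ℝ s) x :=
  isMinOn_iff.2 fun _ hp => convexHull_min h (convex_halfSpace_ge f.isLinear _) hp

theorem isMaxOn_convexHull_of_forall {E : Type*} [AddCommGroup E] [Module ℝ E] {s : Set E}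
    {f : E →ₗ[ℝ] ℝ} {x : E} (h : ∀ p ∈ s, f p ≤ f x) : IsMaxOn f (convexHull ℝ s) x :=
  isMaxOn_iff.2 fun _ hp => convexHull_min h (convex_halfSpace_le f.isLinear _) hp

theorem innerSegLen_eq_of_isMinOn_of_isMaxOn {Δ : Set ℝ²} (hΔ : Convex ℝ Δ) (f : ℝ² →ₗ[ℝ] ℝ)
    {u x y : ℝ²} {r : ℝ} (hu : 0 < f u) (hxy : x + r • u = y) (hx : x ∈ Δ) (hy : y ∈ Δ)
    (hmin : IsMinOn f Δ x) (hmax : IsMaxOn f Δ y) : innerSegLen Δ u = r := by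
  have hf : ∀ (z : ℝ²) (s : ℝ), f (z + s • u) = f z + s * f u := by simp
  have hr : 0 ≤ r := by
    have := isMaxOn_iff.1 hmax x hx
    rw [← hxy, hf] at this
    exact nonneg_of_mul_nonneg_left (by linarith) hu
  refine IsGreatest.csSup_eq ⟨⟨hr, x, hxy ▸ hΔ.segment_subset hx hy⟩, ?_⟩
  rintro s ⟨-, z, hz⟩
  have hzx := isMinOn_iff.1 hmin z (hz (left_mem_segment ℝ _ _))
  have hzy := isMaxOn_iff.1 hmax _ (hz (right_mem_segment ℝ _ _))
  rw [← hxy, hf, hf] at hzy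
  exact le_of_mul_le_mul_right (by linarith) hu

theorem innerₛₗ_vec2 (a b p q : ℝ) : innerₛₗ ℝ (!₂[a, b] : ℝ²) !₂[p, q] = a * p + b * q := by
  simp [PiLp.inner_apply, Fin.sum_univ_two, mul_comm]

def triangle (θ c : ℝ) : Set ℝ² := convexHull ℝ {!₂[0, 0], !₂[1, 0], c • !₂[cos θ, sin θ]}

section Triangle

variable {θ c t : ℝ}

theorem innerSegLen_triangle_of_le (hc : 0 < c) (hθ0 : 0 < θ) (hθπ : θ < π) (ht0 : 0 ≤ t)
    (htθ : t ≤ θ) :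
    innerSegLen (triangle θ c) !₂[cos t, sin t] = c * sin θ / (c * sin (θ - t) + sin t) := by
  have hsθ : 0 < sin θ := sin_pos_of_pos_of_lt_pi hθ0 hθπ
  have hst : 0 ≤ sin t := sin_nonneg_of_nonneg_of_le_pi ht0 (by linarith)
  have hsθt : 0 ≤ sin (θ - t) := sin_nonneg_of_nonneg_of_le_pi (by linarith) (by linarith)
  have hD : 0 < c * sin (θ - t) + sin t := by
    rcases ht0.eq_or_lt with rfl | ht0
    · simpa using mul_pos hc hsθ
    · have := sin_pos_of_pos_of_lt_pi ht0 (by linarith)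
      positivity
  set D := c * sin (θ - t) + sin t with hD_def
  have hs : sin t / D ≤ 1 := (div_le_one hD).2 (by nlinarith)
  -- a normal to the side from `(1, 0)` to `c • (cos θ, sin θ)`
  let f := innerₛₗ ℝ (!₂[c * sin θ, 1 - c * cos θ] : ℝ²)
  have hf : ∀ p q : ℝ, f !₂[p, q] = c * sin θ * p + (1 - c * cos θ) * q := fun _ _ => innerₛₗ_vec2 ..
  have hfC : f (c • !₂[cos θ, sin θ]) = c * sin θ := by rw [map_smul, hf, smul_eq_mul]; ring
  have hfu : f !₂[cos t, sin t] = D := by rw [hf, hD_def, sin_sub]; ring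
  refine innerSegLen_eq_of_isMinOn_of_isMaxOn (convex_convexHull ℝ _) f (hfu ▸ hD)
    (x := !₂[0, 0]) (y := (1 - sin t / D) • !₂[1, 0] + (sin t / D) • c • !₂[cos θ, sin θ])
    ?_ (subset_convexHull ℝ _ (by simp))
    (convex_convexHull ℝ _ (subset_convexHull ℝ _ (by simp)) (subset_convexHull ℝ _ (by simp))
      (by linarith) (by positivity) (by ring))
    (isMinOn_convexHull_of_forall ?_) (isMaxOn_convexHull_of_forall ?_)
  · ext i
    fin_cases i <;> simp only [PiLp.add_apply, PiLp.smul_apply, smul_eq_mul, Fin.zero_eta, Fin.mk_one,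
      Fin.isValue, Matrix.cons_val_zero, Matrix.cons_val_one, Matrix.cons_val_fin_one, mul_zero,
      mul_one, zero_add] <;> field_simp
    rw [hD_def, sin_sub]
    ring
  all_goals simp only [mem_insert_iff, mem_singleton_iff, forall_eq_or_imp, forall_eq, hf, hfC,
    map_add, map_smul, smul_eq_mul, mul_zero, add_zero, mul_one, ← add_mul, sub_add_cancel, one_mul]
  · exact ⟨le_rfl, by positivity, by positivity⟩
  · exact ⟨by positivity, le_rfl, le_rfl⟩

theorem innerSegLen_triangle_of_le_sin (hc : 0 < c) (hθ0 : 0 < θ) (hθt : θ ≤ t) (htπ : t < π)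
    (h : c * sin (t - θ) ≤ sin t) :
    innerSegLen (triangle θ c) !₂[cos t, sin t] = c * sin θ / sin t := by
  have hsθ : 0 < sin θ := sin_pos_of_pos_of_lt_pi hθ0 (by linarith)
  have hst : 0 < sin t := sin_pos_of_pos_of_lt_pi (by linarith) htπ
  have hstθ : 0 ≤ sin (t - θ) := sin_nonneg_of_nonneg_of_le_pi (by linarith) (by linarith)
  have hs : c * sin (t - θ) / sin t ≤ 1 := (div_le_one hst).2 h
  let f := innerₛₗ ℝ (!₂[0, 1] : ℝ²)
  have hf : ∀ p q : ℝ, f !₂[p, q] = q := fun p q => (innerₛₗ_vec2 0 1 p q).trans (by ring)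
  refine innerSegLen_eq_of_isMinOn_of_isMaxOn (convex_convexHull ℝ _) f (by rwa [hf])
    (x := (1 - c * sin (t - θ) / sin t) • !₂[0, 0] + (c * sin (t - θ) / sin t) • !₂[1, 0])
    (y := c • !₂[cos θ, sin θ]) ?_
    (convex_convexHull ℝ _ (subset_convexHull ℝ _ (by simp)) (subset_convexHull ℝ _ (by simp))
      (by linarith) (by positivity) (by ring))
    (subset_convexHull ℝ _ (by simp))
    (isMinOn_convexHull_of_forall ?_) (isMaxOn_convexHull_of_forall ?_)
  · ext i
    fin_cases i <;> simp only [PiLp.add_apply, PiLp.smul_apply, smul_eq_mul, Fin.zero_eta, Fin.mk_one,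
      Fin.isValue, Matrix.cons_val_zero, Matrix.cons_val_one, Matrix.cons_val_fin_one, mul_zero,
      mul_one, zero_add, add_zero] <;> field_simp
    rw [sin_sub]
    ring
  all_goals simp only [mem_insert_iff, mem_singleton_iff, forall_eq_or_imp, forall_eq, hf,
    map_add, map_smul, smul_eq_mul, mul_zero, add_zero]
  · exact ⟨le_rfl, le_rfl, by positivity⟩
  · exact ⟨by positivity, by positivity, le_rfl⟩

theorem innerSegLen_triangle_of_sin_le (hc : 0 < c) (hθ0 : 0 < θ) (hθt : θ < t) (htπ : t ≤ π)
    (h : sin t ≤ c * sin (t - θ)) :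
    innerSegLen (triangle θ c) !₂[cos t, sin t] = sin θ / sin (t - θ) := by
  have hsθ : 0 < sin θ := sin_pos_of_pos_of_lt_pi hθ0 (by linarith)
  have hst : 0 ≤ sin t := sin_nonneg_of_nonneg_of_le_pi (by linarith) htπ
  have hstθ : 0 < sin (t - θ) := sin_pos_of_pos_of_lt_pi (by linarith) (by linarith)
  have hs : sin t / (c * sin (t - θ)) ≤ 1 := (div_le_one (by positivity)).2 h
  -- a normal to the side from `(0, 0)` to `c • (cos θ, sin θ)`
  let f := innerₛₗ ℝ (!₂[-sin θ, cos θ] : ℝ²)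
  have hf : ∀ p q : ℝ, f !₂[p, q] = -sin θ * p + cos θ * q := fun _ _ => innerₛₗ_vec2 ..
  have hfC : f (c • !₂[cos θ, sin θ]) = 0 := by rw [map_smul, hf, smul_eq_mul]; ring
  have hfu : f !₂[cos t, sin t] = sin (t - θ) := by rw [hf, sin_sub]; ring
  refine innerSegLen_eq_of_isMinOn_of_isMaxOn (convex_convexHull ℝ _) f (hfu ▸ hstθ)
    (x := !₂[1, 0])
    (y := (1 - sin t / (c * sin (t - θ))) • !₂[0, 0] +
      (sin t / (c * sin (t - θ))) • c • !₂[cos θ, sin θ])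
    ?_ (subset_convexHull ℝ _ (by simp))
    (convex_convexHull ℝ _ (subset_convexHull ℝ _ (by simp)) (subset_convexHull ℝ _ (by simp))
      (by linarith) (by positivity) (by ring))
    (isMinOn_convexHull_of_forall ?_) (isMaxOn_convexHull_of_forall ?_)
  · ext i
    fin_cases i <;> simp only [PiLp.add_apply, PiLp.smul_apply, smul_eq_mul, Fin.zero_eta, Fin.mk_one,
      Fin.isValue, Matrix.cons_val_zero, Matrix.cons_val_one, Matrix.cons_val_fin_one, mul_zero,
      zero_add] <;> field_simp
    rw [sin_sub]
    ring
  all_goals simp only [mem_insert_iff, mem_singleton_iff, forall_eq_or_imp, forall_eq, hf, hfC,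
    map_add, map_smul, smul_eq_mul, mul_zero, add_zero, mul_one]
  · exact ⟨by linarith, le_rfl, by linarith⟩
  · exact ⟨le_rfl, by linarith, le_rfl⟩

end Triangle

theorem sin_sub_eq_mul_of_eq_smul {θ c t₀ k : ℝ}
    (hk : (!₂[cos t₀, sin t₀] : ℝ²) = k • (c • !₂[cos θ, sin θ] - !₂[1, 0])) (t : ℝ) :
    sin (t₀ - t) = k * (sin t - c * sin (t - θ)) := by
  have h0 := congrArg (· 0) hk
  have h1 := congrArg (· 1) hk
  simp only [PiLp.smul_apply, PiLp.sub_apply, Matrix.cons_val_zero, Matrix.cons_val_one,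
    smul_eq_mul] at h0 h1
  rw [sin_sub, sin_sub, h0, h1]
  ring

/-- Proposition 4.2(i): explicit piecewise form of the parametrized
inner-segment length function of a triangle in the family 𝒞. -/
theorem stmt12 (θ c : ℝ) (hθ : θ ∈ Set.Ioo 0 Real.pi) (hc : 0 < c)
    (t₀ : ℝ) (ht₀ : t₀ ∈ Set.Ioo θ Real.pi)
    (ht₀' : ∃ k : ℝ, 0 < k ∧
      (!₂[Real.cos t₀, Real.sin t₀] : EuclideanSpace ℝ (Fin 2)) =
        k • (c • (!₂[Real.cos θ, Real.sin θ] : EuclideanSpace ℝ (Fin 2)) -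
          (!₂[1, 0] : EuclideanSpace ℝ (Fin 2)))) :
    (∀ t ∈ Set.Icc 0 θ,
      innerSegLen (convexHull ℝ
          ({!₂[0, 0], !₂[1, 0], c • !₂[Real.cos θ, Real.sin θ]} :
            Set (EuclideanSpace ℝ (Fin 2))))
        !₂[Real.cos t, Real.sin t] =
        c * Real.sin θ / (c * Real.sin (θ - t) + Real.sin t)) ∧
    (∀ t ∈ Set.Icc θ t₀,
      innerSegLen (convexHull ℝ
          ({!₂[0, 0], !₂[1, 0], c • !₂[Real.cos θ, Real.sin θ]} :
            Set (EuclideanSpace ℝ (Fin 2))))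
        !₂[Real.cos t, Real.sin t] =
        c * Real.sin θ / Real.sin t) ∧
    (∀ t ∈ Set.Icc t₀ Real.pi,
      innerSegLen (convexHull ℝ
          ({!₂[0, 0], !₂[1, 0], c • !₂[Real.cos θ, Real.sin θ]} :
            Set (EuclideanSpace ℝ (Fin 2))))
        !₂[Real.cos t, Real.sin t] =
        Real.sin θ / Real.sin (t - θ)) := by
  obtain ⟨hθ0, hθπ⟩ := hθ
  obtain ⟨hθt₀, ht₀π⟩ := ht₀
  obtain ⟨k, hk, hdir⟩ := ht₀'
  refine ⟨fun t ⟨ht0, htθ⟩ => innerSegLen_triangle_of_le hc hθ0 hθπ ht0 htθ,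
    fun t ⟨hθt, htt₀⟩ => innerSegLen_triangle_of_le_sin hc hθ0 hθt (by linarith) ?_,
    fun t ⟨ht₀t, htπ⟩ => innerSegLen_triangle_of_sin_le hc hθ0 (by linarith) htπ ?_⟩
  · have : 0 ≤ sin (t₀ - t) := sin_nonneg_of_nonneg_of_le_pi (by linarith) (by linarith)
    rw [sin_sub_eq_mul_of_eq_smul hdir] at this
    linarith [nonneg_of_mul_nonneg_right this hk]
  · have : sin (t₀ - t) ≤ 0 := sin_nonpos_of_nonpos_of_neg_pi_le (by linarith) (by linarith)
    rw [sin_sub_eq_mul_of_eq_smul hdir] at this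
    linarith [nonpos_of_mul_nonpos_right this hk]
end

section
/- (Proposition 4.2(ii) / Proposition 4.4(ii).) Let Δ ⊆ ℝ² be a nondegenerate closed triangle, i.e., the convex hull of three affinely independent points. Then the parametrized inner-segment length function χ : ℝ → ℝ defined by χ(t) = d(Δ, (cos t, sin t)) is continuous. -/
/-!
A segment `[x, x + v]` fits in a convex set `K` iff `v ∈ K - K`, so `d(K, u)` is the largest
`r` with `r • u ∈ K - K`, i.e. `d(K, u) = (gauge (K - K) u)⁻¹`. For a nondegenerate triangle,
`K - K` is a compact convex neighbourhood of `0`, whose gauge is continuous and positive away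
from `0`; hence `t ↦ d(K, (cos t, sin t))` is continuous.
-/

open Set Pointwise Topology

theorem Convex.exists_segment_subset_iff_mem_sub {E : Type*} [AddCommGroup E] [Module ℝ E]
    {K : Set E} (hK : Convex ℝ K) {v : E} :
    (∃ x, segment ℝ x (x + v) ⊆ K) ↔ v ∈ K - K := by
  constructor
  · rintro ⟨x, hx⟩
    exact ⟨x + v, hx (right_mem_segment ℝ _ _), x, hx (left_mem_segment ℝ _ _),
      add_sub_cancel_left x v⟩
  · rintro ⟨a, ha, b, hb, rfl⟩
    exact ⟨b, by simpa using hK.segment_subset hb ha⟩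

theorem IsCompact.sub {G : Type*} [AddGroup G] [TopologicalSpace G] [IsTopologicalAddGroup G]
    {s t : Set G} (hs : IsCompact s) (ht : IsCompact t) : IsCompact (s - t) := by
  simpa only [sub_eq_add_neg] using hs.add ht.neg

theorem sub_self_mem_nhds_zero {G : Type*} [AddGroup G] [TopologicalSpace G]
    [IsTopologicalAddGroup G] {K : Set G} (hK : (interior K).Nonempty) : K - K ∈ 𝓝 0 := by
  obtain ⟨x, hx⟩ := hK
  refine mem_interior_iff_mem_nhds.1 (subset_interior_sub_left ?_)
  exact ⟨x, hx, x, interior_subset hx, sub_self x⟩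

section Gauge

variable {E : Type*} [NormedAddCommGroup E] [NormedSpace ℝ E] {s : Set E}

theorem IsCompact.gauge_pos (hs : IsCompact s) (hs₀ : s ∈ 𝓝 0) {x : E} (hx : x ≠ 0) :
    0 < gauge s x :=
  (_root_.gauge_pos (absorbent_nhds_zero hs₀)
    (NormedSpace.isVonNBounded_of_isBounded _ hs.isBounded)).2 hx

theorem smul_mem_iff_le_inv_gauge (hc : Convex ℝ s) (hcl : IsClosed s) (hs₀ : s ∈ 𝓝 0) {x : E}
    (hx : 0 < gauge s x) {r : ℝ} (hr : 0 ≤ r) : r • x ∈ s ↔ r ≤ (gauge s x)⁻¹ := by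
  rw [← hcl.closure_eq, ← gauge_le_one_iff_mem_closure hc hs₀, hcl.closure_eq,
    gauge_smul_of_nonneg hr, smul_eq_mul, ← le_div_iff₀ hx, one_div]

end Gauge

theorem innerSegLen_eq_inv_gauge {K : Set (EuclideanSpace ℝ (Fin 2))} (hK : Convex ℝ K)
    (hKc : IsCompact K) (hK₀ : K - K ∈ 𝓝 0) {u : EuclideanSpace ℝ (Fin 2)} (hu : u ≠ 0) :
    innerSegLen K u = (gauge (K - K) u)⁻¹ := by
  have hD : IsCompact (K - K) := hKc.sub hKc
  have hg := hD.gauge_pos hK₀ hu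
  have hset : {r : ℝ | 0 ≤ r ∧ ∃ x, segment ℝ x (x + r • u) ⊆ K} =
      Icc 0 (gauge (K - K) u)⁻¹ := by
    ext r
    simp only [mem_ofPred_eq, mem_Icc, hK.exists_segment_subset_iff_mem_sub]
    exact and_congr_right fun hr =>
      smul_mem_iff_le_inv_gauge (hK.sub hK) hD.isClosed hK₀ hg hr
  rw [innerSegLen, hset, csSup_Icc (inv_nonneg.2 hg.le)]

theorem AffineIndependent.interior_convexHull_nonempty {V ι : Type*}
    [NormedAddCommGroup V] [NormedSpace ℝ V] [FiniteDimensional ℝ V] [Fintype ι]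
    {p : ι → V} (hp : AffineIndependent ℝ p)
    (hcard : Fintype.card ι = Module.finrank ℝ V + 1) :
    (interior (convexHull ℝ (range p))).Nonempty := by
  rw [interior_convexHull_nonempty_iff_affineSpan_eq_top]
  exact hp.affineSpan_eq_top_iff_card_eq_finrank_add_one.2 hcard

theorem continuous_cos_sin : Continuous fun t : ℝ => !₂[Real.cos t, Real.sin t] := by
  fun_prop

theorem cos_sin_ne_zero (t : ℝ) : !₂[Real.cos t, Real.sin t] ≠ 0 := by
  intro h
  have h0 : Real.cos t = 0 := by simpa using congrArg (fun v => v 0) h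
  have h1 : Real.sin t = 0 := by simpa using congrArg (fun v => v 1) h
  simpa [h0, h1] using Real.sin_sq_add_cos_sq t

/-- Proposition 4.2(ii) / 4.4(ii): for a nondegenerate closed triangle the
parametrized inner-segment length function `χ(t) = d(Δ, (cos t, sin t))`
is continuous. -/
theorem stmt13 (p : Fin 3 → EuclideanSpace ℝ (Fin 2)) (hp : AffineIndependent ℝ p) :
    Continuous fun t : ℝ =>
      innerSegLen (convexHull ℝ (Set.range p)) !₂[Real.cos t, Real.sin t] := by
  set K := convexHull ℝ (range p)
  have hK : Convex ℝ K := convex_convexHull ℝ _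
  have hKc : IsCompact K := (finite_range p).isCompact_convexHull ℝ
  have hK₀ : K - K ∈ 𝓝 0 := sub_self_mem_nhds_zero (hp.interior_convexHull_nonempty (by simp))
  refine Continuous.inv₀ ((continuous_gauge (hK.sub hK) hK₀).comp continuous_cos_sin)
    (fun t => ((hKc.sub hKc).gauge_pos hK₀ (cos_sin_ne_zero t)).ne') |>.congr fun t => ?_
  exact (innerSegLen_eq_inv_gauge hK hKc hK₀ (cos_sin_ne_zero t)).symm
end
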